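/- arXiv:2402.08238 — 3 statements merged into one kernel-verified Lean document; each statement's English description precedes it below -/
import Mathlib

section
/- Let w ∈ ℝ^K with w > 0 componentwise and ‖w‖₂ = 1, and let r*, r ∈ ℝ^K with ⟨w, r − r*⟩ > 0. Define a = ‖r* − r‖₂² / ⟨w, r − r*⟩, b = −min_k ((r*_k − r_k)/w_k), and u = (a + b)·w + (r* − r). Then u > 0 componentwise, a > 0, and b > 0. -/
theorem stmt_5 {K : ℕ} (hK : 0 < K) (w rstar r : Fin K → ℝ)
    (hwpos : ∀ k, 0 < w k)
    (hwnorm : Real.sqrt (∑ k, (w k) ^ 2) = 1)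
    (hstrict : 0 < ∑ k, w k * (r k - rstar k))
    (a b : ℝ)
    (ha : a = (∑ k, (rstar k - r k) ^ 2) / (∑ k, w k * (r k - rstar k)))
    (hb : b = -((Finset.univ.inf' (Finset.univ_nonempty_iff.mpr ⟨⟨0, hK⟩⟩)
        fun k => (rstar k - r k) / w k)))
    (u : Fin K → ℝ) (hu : u = fun k => (a + b) * w k + (rstar k - r k)) :
    (∀ k, 0 < u k) ∧ 0 < a ∧ 0 < b := by
  have hne : ∃ k, rstar k ≠ r k := by
    by_contra h
    push_neg at h
    have : (∑ k, w k * (r k - rstar k)) = 0 := by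
      apply Finset.sum_eq_zero
      intro k _
      rw [h k]; ring
    linarith
  obtain ⟨k0, hk0⟩ := hne
  have hnum : 0 < ∑ k, (rstar k - r k) ^ 2 := by
    apply Finset.sum_pos' (fun k _ => sq_nonneg _)
    exact ⟨k0, Finset.mem_univ _, by have h := sub_ne_zero_of_ne hk0; positivity⟩
  have hapos : 0 < a := ha ▸ div_pos hnum hstrict
  have hbpos : 0 < b := by
    by_contra hb'
    push_neg at hb'
    have hinf : 0 ≤ Finset.univ.inf' (Finset.univ_nonempty_iff.mpr ⟨⟨0, hK⟩⟩)
        fun k => (rstar k - r k) / w k := by linarith [hb ▸ hb']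
    have hterm : ∀ k, 0 ≤ rstar k - r k := by
      intro k
      have := le_trans hinf (Finset.inf'_le _ (Finset.mem_univ k))
      have hw := hwpos k
      have := (div_nonneg_iff.mp (by simpa using this))
      rcases this with ⟨h1, _⟩ | ⟨_, h2⟩
      · exact h1
      · linarith
    have : (∑ k, w k * (r k - rstar k)) ≤ 0 := by
      apply Finset.sum_nonpos
      intro k _
      have := hterm k
      have hw := (hwpos k).le
      nlinarith
    linarith
  refine ⟨?_, hapos, hbpos⟩
  intro k
  have hle : (Finset.univ.inf' (Finset.univ_nonempty_iff.mpr ⟨⟨0, hK⟩⟩)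
      fun j => (rstar j - r j) / w j) ≤ (rstar k - r k) / w k :=
    Finset.inf'_le _ (Finset.mem_univ k)
  have hbge : -((rstar k - r k) / w k) ≤ b := by rw [hb]; linarith
  have hw := hwpos k
  have h1 : -(rstar k - r k) ≤ b * w k := by
    have h2 := mul_le_mul_of_nonneg_right hbge hw.le
    rw [neg_mul, div_mul_cancel₀ _ hw.ne'] at h2
    exact h2
  have : 0 < a * w k := mul_pos hapos hw
  rw [hu]
  simp only
  nlinarith
end

section
/- Under the hypotheses of the previous statement (w > 0, ‖w‖₂ = 1, ⟨w, r − r*⟩ > 0, a = ‖r* − r‖₂²/⟨w, r − r*⟩, b = −min_k((r*_k − r_k)/w_k), u = (a+b)w + (r* − r)), the normalized vector w' = u/‖u‖₂ satisfies w' > 0 componentwise and ‖w'‖₂ = 1. -/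
theorem stmt_6 {K : ℕ} (hK : 0 < K) (w rstar r : Fin K → ℝ)
    (hwpos : ∀ k, 0 < w k)
    (hwnorm : Real.sqrt (∑ k, (w k) ^ 2) = 1)
    (hstrict : 0 < ∑ k, w k * (r k - rstar k))
    (a b : ℝ)
    (ha : a = (∑ k, (rstar k - r k) ^ 2) / (∑ k, w k * (r k - rstar k)))
    (hb : b = -((Finset.univ.inf' (Finset.univ_nonempty_iff.mpr ⟨⟨0, hK⟩⟩)
        fun k => (rstar k - r k) / w k)))
    (u : Fin K → ℝ) (hu : u = fun k => (a + b) * w k + (rstar k - r k))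
    (w' : Fin K → ℝ) (hw' : w' = fun k => u k / Real.sqrt (∑ j, (u j) ^ 2)) :
    (∀ k, 0 < w' k) ∧ Real.sqrt (∑ k, (w' k) ^ 2) = 1 := by
  have hnum : 0 < ∑ k, (rstar k - r k) ^ 2 := by
    by_contra h
    push_neg at h
    have hz : ∑ k, (rstar k - r k) ^ 2 = 0 :=
      le_antisymm h (Finset.sum_nonneg fun k _ => sq_nonneg _)
    have hall := (Finset.sum_eq_zero_iff_of_nonneg fun k _ => sq_nonneg _).mp hz
    have : ∑ k, w k * (r k - rstar k) = 0 := by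
      apply Finset.sum_eq_zero
      intro k hk
      have h0 : rstar k - r k = 0 := pow_eq_zero_iff two_ne_zero |>.mp (hall k hk)
      have h1 : r k - rstar k = 0 := by linarith
      rw [h1, mul_zero]
    linarith
  have hapos : 0 < a := ha ▸ div_pos hnum hstrict
  have hupos : ∀ k, 0 < u k := by
    intro k
    have hinf : (Finset.univ.inf' (Finset.univ_nonempty_iff.mpr ⟨⟨0, hK⟩⟩)
        fun k => (rstar k - r k) / w k) ≤ (rstar k - r k) / w k :=
      Finset.inf'_le _ (Finset.mem_univ k)
    have hb' : -b ≤ (rstar k - r k) / w k := by rw [hb]; simpa using hinf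
    have h2 : -b * w k ≤ rstar k - r k := (le_div_iff₀ (hwpos k)).mp hb'
    have hwk := hwpos k
    rw [hu]
    simp only
    nlinarith
  have hS : 0 < ∑ j, (u j) ^ 2 := by
    apply Finset.sum_pos
    · intro j _; exact pow_pos (hupos j) 2
    · exact Finset.univ_nonempty_iff.mpr ⟨⟨0, hK⟩⟩
  have hs : 0 < Real.sqrt (∑ j, (u j) ^ 2) := Real.sqrt_pos.mpr hS
  constructor
  · intro k
    rw [hw']
    exact div_pos (hupos k) hs
  · rw [hw']
    have : ∑ k, (u k / Real.sqrt (∑ j, (u j) ^ 2)) ^ 2 = 1 := by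
      simp_rw [div_pow]
      rw [← Finset.sum_div, Real.sq_sqrt hS.le, div_self hS.ne']
    simp only
    rw [this, Real.sqrt_one]
end

section
/- Let w, w* ∈ ℝ^K be unit vectors with all components positive, and let r, r* ∈ ℝ^K with ⟨w, r − r*⟩ > 0 and ⟨w*, r* − r⟩ > 0. Let a, b, u be as in the solver update (a = ‖r* − r‖₂²/⟨w, r − r*⟩, b = −min_k((r*_k − r_k)/w_k), u = (a+b)w + (r* − r), w' = u/‖u‖₂). If moreover ‖u‖₂ < a + b, then ⟨w', w*⟩ > ⟨w, w*⟩. -/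
theorem stmt_10 {K : ℕ} (hK : 0 < K) (w wstar rstar r : Fin K → ℝ)
    (hwpos : ∀ k, 0 < w k) (hwstarpos : ∀ k, 0 < wstar k)
    (hwnorm : ∑ k, (w k) ^ 2 = 1) (hwstarnorm : ∑ k, (wstar k) ^ 2 = 1)
    (hstrict : 0 < ∑ k, w k * (r k - rstar k))
    (hstrictstar : 0 < ∑ k, wstar k * (rstar k - r k))
    (a b : ℝ)
    (ha : a = (∑ k, (rstar k - r k) ^ 2) / (∑ k, w k * (r k - rstar k)))
    (hb : b = -((Finset.univ.inf' (Finset.univ_nonempty_iff.mpr ⟨⟨0, hK⟩⟩)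
        fun k => (rstar k - r k) / w k)))
    (u : Fin K → ℝ) (hu : u = fun k => (a + b) * w k + (rstar k - r k))
    (hnorm_lt : Real.sqrt (∑ k, (u k) ^ 2) < a + b)
    (w' : Fin K → ℝ) (hw' : w' = fun k => u k / Real.sqrt (∑ j, (u j) ^ 2)) :
    ∑ k, w k * wstar k < ∑ k, w' k * wstar k := by
  set N := Real.sqrt (∑ k, (u k) ^ 2) with hN
  have hN0 : 0 ≤ N := Real.sqrt_nonneg _
  have hab : 0 < a + b := lt_of_le_of_lt hN0 hnorm_lt
  have hW : 0 < ∑ k, w k * wstar k :=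
    Finset.sum_pos (fun k _ => mul_pos (hwpos k) (hwstarpos k))
      (Finset.univ_nonempty_iff.mpr ⟨⟨0, hK⟩⟩)
  have hkey : ∑ k, u k * wstar k
      = (a + b) * ∑ k, w k * wstar k + ∑ k, wstar k * (rstar k - r k) := by
    subst hu
    rw [Finset.mul_sum, ← Finset.sum_add_distrib]
    apply Finset.sum_congr rfl
    intro k _; ring
  have hUW : (a + b) * ∑ k, w k * wstar k < ∑ k, u k * wstar k := by
    rw [hkey]; linarith
  have hSpos : 0 < ∑ k, (u k) ^ 2 := by
    rcases (Finset.sum_nonneg (fun k _ => sq_nonneg (u k))).lt_or_eq with h | h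
    · exact h
    · exfalso
      have hz : ∀ k ∈ Finset.univ, (u k) ^ 2 = 0 :=
        (Finset.sum_eq_zero_iff_of_nonneg (fun k _ => sq_nonneg (u k))).mp h.symm
      have : ∑ k, u k * wstar k = 0 := by
        apply Finset.sum_eq_zero
        intro k hk
        have := pow_eq_zero_iff (n := 2) (by norm_num) |>.mp (hz k hk)
        simp [this]
      nlinarith [mul_pos hab hW]
  have hNpos : 0 < N := Real.sqrt_pos.mpr hSpos
  have hgoal : ∑ k, w' k * wstar k = (∑ k, u k * wstar k) / N := by
    subst hw'
    rw [Finset.sum_div]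
    apply Finset.sum_congr rfl
    intro k _; simp only []; ring
  rw [hgoal]
  rw [lt_div_iff₀ hNpos]
  calc (∑ k, w k * wstar k) * N < (∑ k, w k * wstar k) * (a + b) := by
        exact mul_lt_mul_of_pos_left hnorm_lt hW
    _ = (a + b) * ∑ k, w k * wstar k := by ring
    _ < ∑ k, u k * wstar k := hUW
end
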